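/- arXiv:2406.11730 — 2 statements merged into one kernel-verified Lean document; each statement's English description precedes it below -/
import Mathlib

section
/- Let N be a finite set of n players with n ≥ 3, let x_1, …, x_n and α be vectors in a real inner product space, and define the utility function U on subsets of N by U(S) = ‖α‖² − ‖(1/|S|)·Σ_{i∈S} x_i − α‖² for nonempty S and U(∅) = 0. Then for every j ∈ N the Shapley value of j equals φ_j(U) = A·‖x_j‖² + B·⟨Σ_{i∈N} x_i, x_j⟩ + C·‖Σ_{i∈N} x_i‖² + D·Σ_{i∈N} ‖x_i‖² + E·⟨x_j, α⟩ + F·⟨Σ_{i∈N} x_i, α⟩, where, writing H_n = Σ_{k=1}^n 1/k and H_n^{(2)} = Σ_{k=1}^n 1/k², the coefficients are A = −H_n^{(2)}/n + (2H_n − 3H_n^{(2)} + 1/n)/(n(n−1)) + 2(2H_n − 2H_n^{(2)} − 1 + 1/n)/(n(n−1)(n−2)), B = −2(H_n − H_n^{(2)} − 1/n + 1/n²)/((n−1)(n−2)), C = (2H_n − 2H_n^{(2)} − 1 + 1/n)/(n(n−1)(n−2)), D = (H_n^{(2)} − 1/n)/(n(n−1)) − (2H_n − 2H_n^{(2)}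 − 1 + 1/n)/(n(n−1)(n−2)), E = 2(H_n − 1/n)/(n−1), and F = −2(H_n − 1)/(n(n−1)). -/
/-!
Put `m = n - 1` and `A = N ∖ {j}`. The Shapley value of `j` is the average over the layers
`s = 0, …, m` of the mean of `U (S ∪ {j}) - U S` over the `s`-subsets `S` of `A`. As
`U S = 2 ⟪Σ_S x, α⟫ / |S| - ‖Σ_S x‖² / |S|²`, that mean only involves the means of `Σ_S x`, which
is `(s / m) • Σ_A x`, and of `‖Σ_S x‖²`, in which every diagonal term `‖x i‖²` has weight `s / m`
and every pair `i ≠ l` has weight `s (s - 1) / (m (m - 1))`. For `s = t + 1` the layer mean is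
therefore a combination of `1 / (t + 1)`, `1 / (t + 2)` and `1 / (t + 2)²`, and summing over
`t < m` produces `H_n - 1 / n`, `H_n - 1` and `H_n^{(2)} - 1`.
-/

open Finset RealInnerProductSpace

theorem Nat.cast_choose_eq_choose_succ_mul_div {K : Type*} [Field K] [CharZero K] (m t : ℕ) :
    (m.choose t : K) = (m + 1).choose (t + 1) * (t + 1) / (m + 1) := by
  rw [eq_div_iff m.cast_add_one_ne_zero, mul_comm]
  exact_mod_cast Nat.add_one_mul_choose_eq m t

namespace Finset

variable {ι M : Type*} [DecidableEq ι]

theorem sum_Icc_one_eq_sum_range [AddCommMonoid M] (f : ℕ → M) (n : ℕ) :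
    ∑ k ∈ Icc 1 n, f k = ∑ t ∈ range n, f (t + 1) := by
  rw [range_eq_Ico, sum_Ico_add' f 0 n 1, ← Ico_add_one_right_eq_Icc]

theorem sum_powersetCard_succ_sum [AddCommMonoid M] (A : Finset ι) (t : ℕ)
    (h : ι → Finset ι → M) :
    ∑ S ∈ A.powersetCard (t + 1), ∑ i ∈ S, h i S =
      ∑ i ∈ A, ∑ S ∈ (A.erase i).powersetCard t, h i (insert i S) := by
  rw [sum_sigma', sum_sigma']
  refine sum_bij' (fun p _ => ⟨p.2, p.1.erase p.2⟩) (fun p _ => ⟨insert p.1 p.2, p.1⟩)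
    ?_ ?_ ?_ ?_ ?_ <;> simp only [mem_sigma, mem_powersetCard, and_imp, Sigma.forall]
  · intro S i hSA hS hi
    exact ⟨hSA hi, erase_subset_erase i hSA, by rw [card_erase_of_mem hi, hS]; rfl⟩
  · intro i S hi hSA hS
    have hiS : i ∉ S := fun h => (mem_erase.mp (hSA h)).1 rfl
    exact ⟨⟨insert_subset hi (hSA.trans (erase_subset i A)), by rw [card_insert_of_notMem hiS, hS]⟩,
      mem_insert_self i S⟩
  · intro S i _ _ hi
    rw [insert_erase hi]
  · intro i S _ hSA _
    rw [erase_insert fun h => (mem_erase.mp (hSA h)).1 rfl]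
  · intro S i _ _ hi
    rw [insert_erase hi]

theorem sum_powersetCard_sum_eq_smul {K : Type*} [Field K] [CharZero K] [AddCommGroup M]
    [Module K M] (A : Finset ι) (s : ℕ) (f : ι → M) :
    ∑ S ∈ A.powersetCard s, ∑ i ∈ S, f i = ((#A).choose s * s / #A : K) • ∑ i ∈ A, f i := by
  rcases s with _ | t
  · simp
  rcases A.eq_empty_or_nonempty with rfl | hA
  · rw [powersetCard_eq_empty.mpr (by simp), sum_empty, sum_empty, smul_zero]
  obtain ⟨m, hm⟩ := Nat.exists_eq_add_one_of_ne_zero hA.card_pos.ne'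
  have hinner : ∀ i ∈ A, ∑ S ∈ (A.erase i).powersetCard t, f i = (m.choose t : K) • f i := by
    intro i hi
    rw [sum_const, card_powersetCard, card_erase_of_mem hi, hm, Nat.add_sub_cancel,
      Nat.cast_smul_eq_nsmul]
  rw [sum_powersetCard_succ_sum, sum_congr rfl hinner, ← smul_sum, hm,
    Nat.cast_choose_eq_choose_succ_mul_div]
  norm_cast

end Finset

theorem sum_range_inv_add_one (m : ℕ) :
    ∑ t ∈ range m, ((t : ℝ) + 1)⁻¹ = ∑ k ∈ Icc 1 (m + 1), (1 : ℝ) / k - ((m : ℝ) + 1)⁻¹ := by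
  rw [sum_Icc_one_eq_sum_range, sum_range_succ]
  push_cast
  simp [one_div]

theorem sum_range_inv_add_two (m : ℕ) :
    ∑ t ∈ range m, ((t : ℝ) + 2)⁻¹ = ∑ k ∈ Icc 1 (m + 1), (1 : ℝ) / k - 1 := by
  rw [sum_Icc_one_eq_sum_range, sum_range_succ']
  push_cast
  ring_nf

theorem sum_range_inv_add_two_sq (m : ℕ) :
    ∑ t ∈ range m, (((t : ℝ) + 2) ^ 2)⁻¹ = ∑ k ∈ Icc 1 (m + 1), (1 : ℝ) / (k : ℝ) ^ 2 - 1 := by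
  rw [sum_Icc_one_eq_sum_range, sum_range_succ']
  push_cast
  ring_nf

section

variable {ι E : Type*} [NormedAddCommGroup E] [InnerProductSpace ℝ E]

theorem norm_sq_sub_norm_smul_sub_sq (c : ℝ) (v α : E) :
    ‖α‖ ^ 2 - ‖c • v - α‖ ^ 2 = 2 * c * ⟪v, α⟫ - c ^ 2 * ‖v‖ ^ 2 := by
  rw [norm_sub_sq_real, norm_smul, real_inner_smul_left, mul_pow, Real.norm_eq_abs, sq_abs]
  ring

/-- The utility `U`; the empty coalition gets `0` since `(0 : ℝ)⁻¹ = 0`. -/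
noncomputable def meanUtility (x : ι → E) (α : E) (S : Finset ι) : ℝ :=
  ‖α‖ ^ 2 - ‖(#S : ℝ)⁻¹ • ∑ i ∈ S, x i - α‖ ^ 2

theorem meanUtility_singleton_sub_empty (x : ι → E) (α : E) (j : ι) :
    meanUtility x α {j} - meanUtility x α ∅ = 2 * ⟪x j, α⟫ - ‖x j‖ ^ 2 := by
  simp only [meanUtility, norm_sq_sub_norm_smul_sub_sq]
  simp

variable [DecidableEq ι]

theorem sum_inner_sum_erase (A : Finset ι) (x : ι → E) :
    ∑ i ∈ A, ⟪x i, ∑ l ∈ A.erase i, x l⟫ = ‖∑ i ∈ A, x i‖ ^ 2 - ∑ i ∈ A, ‖x i‖ ^ 2 := by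
  rw [sum_congr rfl fun i hi => by rw [sum_erase_eq_sub hi, inner_sub_right,
    real_inner_self_eq_norm_sq], sum_sub_distrib, ← sum_inner, real_inner_self_eq_norm_sq]

theorem sum_powersetCard_norm_sum_sq (A : Finset ι) (s : ℕ) (x : ι → E) :
    ∑ S ∈ A.powersetCard s, ‖∑ i ∈ S, x i‖ ^ 2 =
      (#A).choose s * (s / #A * ∑ i ∈ A, ‖x i‖ ^ 2
        + s * (s - 1) / (#A * (#A - 1)) * (‖∑ i ∈ A, x i‖ ^ 2 - ∑ i ∈ A, ‖x i‖ ^ 2)) := by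
  rcases s with _ | t
  · simp
  rcases A.eq_empty_or_nonempty with rfl | hA
  · rw [powersetCard_eq_empty.mpr (by simp)]
    simp
  obtain ⟨m, hm⟩ := Nat.exists_eq_add_one_of_ne_zero hA.card_pos.ne'
  have hinner : ∀ i ∈ A, ∑ S ∈ (A.erase i).powersetCard t, ⟪x i, ∑ l ∈ insert i S, x l⟫ =
      m.choose t * ‖x i‖ ^ 2 + m.choose t * t / m * ⟪x i, ∑ l ∈ A.erase i, x l⟫ := by
    intro i hi
    have hcard : #(A.erase i) = m := by rw [card_erase_of_mem hi, hm, Nat.add_sub_cancel]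
    have hsplit : ∀ S ∈ (A.erase i).powersetCard t,
        ⟪x i, ∑ l ∈ insert i S, x l⟫ = ‖x i‖ ^ 2 + ⟪x i, ∑ l ∈ S, x l⟫ := by
      intro S hS
      have hiS : i ∉ S := fun h => (mem_erase.mp ((mem_powersetCard.mp hS).1 h)).1 rfl
      rw [sum_insert hiS, inner_add_right, real_inner_self_eq_norm_sq]
    rw [sum_congr rfl hsplit, sum_add_distrib, sum_const, card_powersetCard, hcard, ← inner_sum,
      sum_powersetCard_sum_eq_smul (K := ℝ), hcard, inner_smul_right, nsmul_eq_mul]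
  rw [sum_congr rfl fun S _ => by rw [← real_inner_self_eq_norm_sq, sum_inner],
    sum_powersetCard_succ_sum A t (fun i S => ⟪x i, ∑ l ∈ S, x l⟫), sum_congr rfl hinner,
    sum_add_distrib, ← mul_sum, ← mul_sum, sum_inner_sum_erase, hm,
    Nat.cast_choose_eq_choose_succ_mul_div]
  push_cast
  rw [add_sub_cancel_right, ← div_div]
  ring

theorem meanUtility_insert_sub (x : ι → E) (α : E) {j : ι} {S : Finset ι} (hj : j ∉ S) :
    meanUtility x α (insert j S) - meanUtility x α S =
      2 / (#S + 1) * (⟪∑ i ∈ S, x i, α⟫ + ⟪x j, α⟫)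
        - (‖∑ i ∈ S, x i‖ ^ 2 + 2 * ⟪∑ i ∈ S, x i, x j⟫ + ‖x j‖ ^ 2) / (#S + 1) ^ 2
        - 2 / #S * ⟪∑ i ∈ S, x i, α⟫ + ‖∑ i ∈ S, x i‖ ^ 2 / #S ^ 2 := by
  simp only [meanUtility, norm_sq_sub_norm_smul_sub_sq, sum_insert hj, card_insert_of_notMem hj,
    inner_add_left, norm_add_sq_real, real_inner_comm (x j), inv_pow]
  push_cast
  ring

theorem mean_marginal_meanUtility_succ (x : ι → E) (α : E) {A : Finset ι} {j : ι} (hj : j ∉ A)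
    (hA : 2 ≤ #A) {t : ℕ} (ht : t + 1 ≤ #A) :
    ((#A).choose (t + 1) : ℝ)⁻¹ *
        ∑ S ∈ A.powersetCard (t + 1), (meanUtility x α (insert j S) - meanUtility x α S) =
      let m : ℝ := #A
      let G := ∑ i ∈ A, ‖x i‖ ^ 2
      -- the mean of `⟪x i, x l⟫` over the ordered pairs of distinct `i, l ∈ A`
      let P := (‖∑ i ∈ A, x i‖ ^ 2 - G) / (m * (m - 1))
      (G / m - P) * ((t : ℝ) + 1)⁻¹
      + (2 * ⟪x j, α⟫ - 2 * ⟪∑ i ∈ A, x i, α⟫ / m - G / m + 3 * P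
          - 2 * ⟪∑ i ∈ A, x i, x j⟫ / m) * ((t : ℝ) + 2)⁻¹
      + (G / m - 2 * P + 2 * ⟪∑ i ∈ A, x i, x j⟫ / m - ‖x j‖ ^ 2) * (((t : ℝ) + 2) ^ 2)⁻¹ := by
  dsimp only
  have hmarg : ∀ S ∈ A.powersetCard (t + 1),
      meanUtility x α (insert j S) - meanUtility x α S =
        2 / (t + 2) * (⟪∑ i ∈ S, x i, α⟫ + ⟪x j, α⟫)
        - (‖∑ i ∈ S, x i‖ ^ 2 + 2 * ⟪∑ i ∈ S, x i, x j⟫ + ‖x j‖ ^ 2) / (t + 2) ^ 2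
        - 2 / (t + 1) * ⟪∑ i ∈ S, x i, α⟫ + ‖∑ i ∈ S, x i‖ ^ 2 / (t + 1) ^ 2 := by
    intro S hS
    obtain ⟨hSA, hS⟩ := mem_powersetCard.mp hS
    rw [meanUtility_insert_sub x α fun h => hj (hSA h), hS]
    push_cast
    ring
  have hC : ((#A).choose (t + 1) : ℝ) ≠ 0 := by exact_mod_cast (Nat.choose_pos ht).ne'
  have hm : (#A : ℝ) ≠ 0 := by positivity
  have hm1 : (#A : ℝ) - 1 ≠ 0 := by
    have : (2 : ℝ) ≤ #A := by exact_mod_cast hA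
    linarith
  rw [sum_congr rfl hmarg]
  simp only [sum_add_distrib, sum_sub_distrib, ← mul_sum, ← sum_div, sum_const, card_powersetCard,
    nsmul_eq_mul, ← sum_inner, sum_powersetCard_sum_eq_smul (K := ℝ), real_inner_smul_left,
    sum_powersetCard_norm_sum_sq, mul_add]
  push_cast
  field_simp
  ring

end

/-- The Shapley value of player `j` under the utility function
`U(S) = ‖α‖² − ‖(1/|S|)·Σ_{i∈S} x i − α‖²` (with `U ∅ = 0`) on a set of `n ≥ 3` players. -/
theorem chg_shapley_closed_form
    {ι : Type*} [Fintype ι] [DecidableEq ι]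
    {E : Type*} [NormedAddCommGroup E] [InnerProductSpace ℝ E]
    (n : ℕ) (hn : 3 ≤ n) (hcard : Fintype.card ι = n)
    (x : ι → E) (α : E) (U : Finset ι → ℝ)
    (hU : ∀ S : Finset ι, S.Nonempty →
      U S = ‖α‖ ^ 2 - ‖(S.card : ℝ)⁻¹ • ∑ i ∈ S, x i - α‖ ^ 2)
    (hU0 : U ∅ = 0)
    (φ : ι → ℝ)
    (hφ : ∀ i : ι, φ i = (n : ℝ)⁻¹ * ∑ k ∈ Icc 1 n,
      ((Nat.choose (n - 1) (k - 1) : ℝ))⁻¹ *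
        ∑ S ∈ (Finset.univ.erase i).powerset.filter (fun S => S.card = k - 1),
          (U (insert i S) - U S))
    (j : ι)
    (Hn Hn2 : ℝ)
    (hHn : Hn = ∑ k ∈ Icc 1 n, (1 : ℝ) / k)
    (hHn2 : Hn2 = ∑ k ∈ Icc 1 n, (1 : ℝ) / (k : ℝ) ^ 2) :
    φ j =
      (-Hn2 / n + (2 * Hn - 3 * Hn2 + 1 / n) / (n * (n - 1))
          + 2 * (2 * Hn - 2 * Hn2 - 1 + 1 / n) / (n * (n - 1) * (n - 2))) * ‖x j‖ ^ 2
      + (-(2 * (Hn - Hn2 - 1 / n + 1 / (n : ℝ) ^ 2) / ((n - 1) * (n - 2))))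
          * ⟪(∑ i, x i), x j⟫
      + ((2 * Hn - 2 * Hn2 - 1 + 1 / n) / (n * (n - 1) * (n - 2))) * ‖∑ i, x i‖ ^ 2
      + ((Hn2 - 1 / n) / (n * (n - 1))
          - (2 * Hn - 2 * Hn2 - 1 + 1 / n) / (n * (n - 1) * (n - 2))) * ∑ i, ‖x i‖ ^ 2
      + (2 * (Hn - 1 / n) / (n - 1)) * ⟪x j, α⟫
      + (-(2 * (Hn - 1) / (n * (n - 1)))) * ⟪(∑ i, x i), α⟫ := by
  obtain ⟨m, rfl⟩ : ∃ m, n = m + 1 := ⟨n - 1, by omega⟩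
  have hA : #(univ.erase j) = m := by
    rw [card_erase_of_mem (mem_univ j), card_univ, hcard, Nat.add_sub_cancel]
  have hU' : U = meanUtility x α := funext fun S => S.eq_empty_or_nonempty.elim
    (by rintro rfl; simp [hU0, meanUtility]) (hU S)
  rw [hφ j, sum_Icc_one_eq_sum_range, sum_range_succ']
  simp only [Nat.add_sub_cancel, ← powersetCard_eq_filter, hU']
  rw [sum_congr rfl fun t ht => hA ▸ mean_marginal_meanUtility_succ x α (notMem_erase j univ)
    (by omega) (by simp at ht; omega)]
  dsimp only
  simp only [sum_add_distrib, ← mul_sum, sum_range_inv_add_one, sum_range_inv_add_two,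
    sum_range_inv_add_two_sq, ← hHn, ← hHn2, Nat.choose_zero_right, powersetCard_zero,
    sum_singleton, insert_empty, meanUtility_singleton_sub_empty]
  rw [← add_sum_erase univ x (mem_univ j), ← add_sum_erase univ (fun i => ‖x i‖ ^ 2) (mem_univ j)]
  simp only [inner_add_left, inner_add_right, norm_add_sq_real, real_inner_self_eq_norm_sq,
    real_inner_comm (x j)]
  have hm : (3 : ℝ) ≤ m + 1 := by exact_mod_cast hn
  have hm0 : (m : ℝ) ≠ 0 := by linarith
  have hm1 : (m : ℝ) - 1 ≠ 0 := by linarith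
  push_cast
  simp only [add_sub_cancel_right, show (m : ℝ) + 1 - 2 = m - 1 by ring]
  field_simp
  ring
end

section
/- Let N be a finite set of n players with n ≥ 2, let x_1, …, x_n and α be vectors in a real inner product space, and define U₂(S) = 2·⟨(1/|S|)·Σ_{i∈S} x_i, α⟩ for nonempty S ⊆ N and U₂(∅) = 0. Then for every j ∈ N, φ_j(U₂) = 2·[ ((1/n)·Σ_{k=1}^n 1/k)·⟨x_j, α⟩ − ((Σ_{k=2}^n 1/k)/(n(n−1)))·Σ_{i∈N∖{j}} ⟨x_i, α⟩ ]. -/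
/-!
`U₂` is twice the mean of `f i = ⟪x i, α⟫` over the coalition. Adding `j` to a coalition `S`
of size `m` moves the mean by `(f j - mean S) / (m + 1)`, and averaged over all `m`-subsets
of `N ∖ {j}` the mean of `S` is the mean over `N ∖ {j}` when `m ≥ 1` (and `0` for `S = ∅`).
The Shapley value is thus `(1/n) Σₖ 2 (f j - [k ≥ 2] mean) / k`, a pair of harmonic sums.
-/

open Finset RealInnerProductSpace
open scoped BigOperators

namespace Finset

variable {ι : Type*} [DecidableEq ι]

theorem card_filter_mem_powersetCard (A : Finset ι) {i : ι} (hi : i ∈ A) (m : ℕ) :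
    #{S ∈ A.powersetCard (m + 1) | i ∈ S} = (#A - 1).choose m := by
  simpa [singleton_subset_iff] using
    card_filter_powersetCard_subset {i} A (m + 1) (singleton_subset_iff.2 hi) (by simp)

theorem sum_powersetCard_sum {M : Type*} [AddCommMonoid M] (A : Finset ι) (m : ℕ)
    (g : ι → M) :
    ∑ S ∈ A.powersetCard (m + 1), ∑ i ∈ S, g i = (#A - 1).choose m • ∑ i ∈ A, g i := by
  rw [sum_comm' (t' := A) (s' := fun i => {S ∈ A.powersetCard (m + 1) | i ∈ S}), smul_sum]
  · refine sum_congr rfl fun i hi => ?_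
    rw [sum_const, card_filter_mem_powersetCard A hi]
  · intro S i
    simp only [mem_filter, mem_powersetCard]
    exact ⟨fun ⟨⟨hSA, hS⟩, hi⟩ => ⟨⟨⟨hSA, hS⟩, hi⟩, hSA hi⟩, fun ⟨h, _⟩ => ⟨h.1, h.2⟩⟩

variable {K : Type*} [Field K] [CharZero K]

theorem expect_powersetCard_expect (A : Finset ι) {m : ℕ} (hm0 : m ≠ 0) (hmA : m ≤ #A)
    (f : ι → K) :
    𝔼 S ∈ A.powersetCard m, 𝔼 i ∈ S, f i = 𝔼 i ∈ A, f i := by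
  obtain ⟨m, rfl⟩ := Nat.exists_eq_succ_of_ne_zero hm0
  obtain ⟨a, ha⟩ := Nat.exists_eq_succ_of_ne_zero (by omega : #A ≠ 0)
  have hchoose : ((a + 1 : ℕ) : K) * a.choose m = (a + 1).choose (m + 1) * (m + 1 : ℕ) := by
    exact_mod_cast Nat.add_one_mul_choose_eq a m
  have hpos : ((a + 1).choose (m + 1) : K) ≠ 0 := by
    exact_mod_cast (Nat.choose_pos (by omega)).ne'
  calc 𝔼 S ∈ A.powersetCard (m + 1), 𝔼 i ∈ S, f i
      = 𝔼 S ∈ A.powersetCard (m + 1), (∑ i ∈ S, f i) / (m + 1 : ℕ) :=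
        expect_congr rfl fun S hS => by
          rw [expect_eq_sum_div_card, (mem_powersetCard.1 hS).2]
    _ = 𝔼 i ∈ A, f i := by
      rw [← expect_div, expect_eq_sum_div_card, sum_powersetCard_sum, card_powersetCard,
        expect_eq_sum_div_card, ha, Nat.succ_sub_one, nsmul_eq_mul]
      field_simp
      linear_combination (∑ i ∈ A, f i) * hchoose

theorem expect_insert_sub_expect {S : Finset ι} {j : ι} (hj : j ∉ S) (f : ι → K) :
    𝔼 i ∈ insert j S, f i - 𝔼 i ∈ S, f i = (f j - 𝔼 i ∈ S, f i) / (#S + 1) := by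
  have hS : (#S : K) + 1 ≠ 0 := Nat.cast_add_one_ne_zero _
  rw [expect_eq_sum_div_card, sum_insert hj, card_insert_of_notMem hj, ← card_mul_expect]
  field_simp
  push_cast
  ring

theorem expect_powersetCard_expect_insert_sub_expect {A : Finset ι} {j : ι} (hj : j ∉ A)
    {m : ℕ} (hmA : m ≤ #A) (f : ι → K) :
    𝔼 S ∈ A.powersetCard m, (𝔼 i ∈ insert j S, f i - 𝔼 i ∈ S, f i)
      = (f j - if m = 0 then 0 else 𝔼 i ∈ A, f i) / (m + 1) := by
  have hjS : ∀ S ∈ A.powersetCard m, j ∉ S := fun S hS hjS => hj ((mem_powersetCard.1 hS).1 hjS)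
  rw [expect_congr rfl fun S hS => by
      rw [expect_insert_sub_expect (hjS S hS), (mem_powersetCard.1 hS).2],
    ← expect_div, expect_sub_distrib, expect_const (powersetCard_nonempty.2 hmA)]
  split_ifs with hm
  · simp [hm]
  · rw [expect_powersetCard_expect A hm hmA]

end Finset

/-- The Shapley value of player `j` under the utility
`U₂(S) = 2·⟪(1/|S|)·Σ_{i∈S} x i, α⟫` (with `U₂ ∅ = 0`) on a set of `n ≥ 2` players. -/
theorem shapley_U2_erase_form
    {ι : Type*} [Fintype ι] [DecidableEq ι]
    {E : Type*} [NormedAddCommGroup E] [InnerProductSpace ℝ E]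
    (n : ℕ) (hn : 2 ≤ n) (hcard : Fintype.card ι = n)
    (x : ι → E) (α : E) (U₂ : Finset ι → ℝ)
    (hU : ∀ S : Finset ι, S.Nonempty →
      U₂ S = 2 * ⟪(S.card : ℝ)⁻¹ • ∑ i ∈ S, x i, α⟫)
    (hU0 : U₂ ∅ = 0)
    (φ : ι → ℝ)
    (hφ : ∀ i : ι, φ i = (n : ℝ)⁻¹ * ∑ k ∈ Icc 1 n,
      ((Nat.choose (n - 1) (k - 1) : ℝ))⁻¹ *
        ∑ S ∈ (Finset.univ.erase i).powerset.filter (fun S => S.card = k - 1),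
          (U₂ (insert i S) - U₂ S))
    (j : ι) :
    φ j = 2 * (((n : ℝ)⁻¹ * ∑ k ∈ Icc 1 n, (1 : ℝ) / k) * ⟪x j, α⟫
      - ((∑ k ∈ Icc 2 n, (1 : ℝ) / k) / (n * (n - 1)))
          * ∑ i ∈ Finset.univ.erase j, ⟪x i, α⟫) := by
  set f : ι → ℝ := fun i => ⟪x i, α⟫
  set A := univ.erase j
  have hU' : ∀ S, U₂ S = 2 * 𝔼 i ∈ S, f i := fun S => by
    rcases S.eq_empty_or_nonempty with rfl | hS
    · simp [hU0]
    · rw [hU S hS, real_inner_smul_left, sum_inner, expect_eq_sum_div_card, inv_mul_eq_div]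
  have hA : #A = n - 1 := by rw [card_erase_of_mem (mem_univ j), card_univ, hcard]
  have hlayer : ∀ k ∈ Icc 1 n, ((Nat.choose (n - 1) (k - 1) : ℝ))⁻¹ *
      ∑ S ∈ A.powerset.filter (fun S => S.card = k - 1), (U₂ (insert j S) - U₂ S)
        = 2 * (f j - if k - 1 = 0 then 0 else 𝔼 i ∈ A, f i) / k := by
    intro k hk
    obtain ⟨hk1, hkn⟩ := mem_Icc.1 hk
    have hkA : k - 1 ≤ #A := by omega
    rw [← powersetCard_eq_filter, ← hA, ← card_powersetCard, inv_mul_eq_div,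
      ← expect_eq_sum_div_card]
    simp only [hU', ← mul_sub, ← mul_expect]
    rw [expect_powersetCard_expect_insert_sub_expect (notMem_erase j univ) hkA,
      Nat.cast_pred hk1, sub_add_cancel, mul_div_assoc]
  have hmean : 𝔼 i ∈ A, f i = (∑ i ∈ A, f i) / (n - 1) := by
    rw [expect_eq_sum_div_card, hA, Nat.cast_pred (by omega)]
  have hn1 : (n : ℝ) - 1 ≠ 0 := sub_ne_zero.2 (by exact_mod_cast (by omega : n ≠ 1))
  rw [hφ j, sum_congr rfl hlayer, ← insert_Icc_add_one_left_eq_Icc (by omega : 1 ≤ n),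
    sum_insert (by simp), sum_insert (by simp),
    sum_congr rfl fun k hk => by rw [if_neg (by simp at hk; omega), hmean]]
  simp only [div_eq_mul_inv, ← mul_sum]
  norm_num
  field_simp
  ring
end
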